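/- For all positive integers a and b, the fourth cumulant of the random variable K with Pr[K = k] = p_{a,b}(k) satisfies κ_4 = Σ_{k=0}^{ab} (k − ab/2)^4 · p_{a,b}(k) − 3·(ab(a+b+1)/12)² = − ab(a+b+1)(a²+b²+ab+a+b)/120. -/
import Mathlib


/-- The q-Pochhammer symbol `(q;q)_n = ∏_{j=0}^{n-1} (1 - q^{j+1})` as a polynomial over `ℚ`. -/
noncomputable def qPochPoly (n : ℕ) : Polynomial ℚ :=
  ∏ j ∈ Finset.range n, (1 - Polynomial.X ^ (j + 1))

/-- The Gaussian (q-binomial) coefficient `[a+b choose a]_q` as a polynomial over `ℚ`. -/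
noncomputable def gaussPoly (a b : ℕ) : Polynomial ℚ :=
  qPochPoly (a + b) / (qPochPoly a * qPochPoly b)

open Polynomial Finset

noncomputable def geomP (m : ℕ) : Polynomial ℚ := ∑ i ∈ Finset.range m, Polynomial.X ^ i

noncomputable def gp : ℕ → ℕ → Polynomial ℚ
  | 0, _ => 1
  | _+1, 0 => 1
  | a+1, b+1 => gp a (b+1) + Polynomial.X ^ (a+1) * gp (a+1) b

lemma gp_zero_left (b : ℕ) : gp 0 b = 1 := by simp [gp]

lemma gp_zero_right : ∀ a, gp a 0 = 1
  | 0 => by simp [gp]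
  | _+1 => by simp [gp]

lemma gp_succ (a b : ℕ) :
    gp (a+1) (b+1) = gp a (b+1) + Polynomial.X ^ (a+1) * gp (a+1) b := by rw [gp]

lemma geomP_add (m n : ℕ) : geomP (m + n) = geomP m + Polynomial.X ^ m * geomP n := by
  simp [geomP, Finset.sum_range_add, pow_add, Finset.mul_sum]

noncomputable def Fprod (a : ℕ) : Polynomial ℚ := ∏ j ∈ Finset.range a, geomP (j+1)
noncomputable def Gprod (a b : ℕ) : Polynomial ℚ := ∏ j ∈ Finset.range a, geomP (b+1+j)

lemma gp_mul_F : ∀ a b, gp a b * Fprod a = Gprod a b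
  | 0, b => by simp [gp_zero_left, Fprod, Gprod]
  | a+1, 0 => by
      simp only [gp_zero_right, one_mul, Fprod, Gprod]
      exact Finset.prod_congr rfl fun j _ => by congr 1; omega
  | a+1, b+1 => by
      have h1 := gp_mul_F a (b+1)
      have h2 := gp_mul_F (a+1) b
      have hG : Gprod (a+1) b = geomP (b+1) * Gprod a (b+1) := by
        rw [Gprod, Finset.prod_range_succ', Gprod, mul_comm]
        congr 1
        exact Finset.prod_congr rfl fun j _ => by congr 1; omega
      have hF : Fprod (a+1) = Fprod a * geomP (a+1) := Finset.prod_range_succ _ _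
      have hG2 : Gprod (a+1) (b+1) = Gprod a (b+1) * geomP (b+1+1+a) := Finset.prod_range_succ _ _
      have hgeom : geomP (a+1) + Polynomial.X ^ (a+1) * geomP (b+1) = geomP (b+1+1+a) := by
        rw [show b+1+1+a = (a+1)+(b+1) by omega]
        exact (geomP_add _ _).symm
      rw [gp_succ, hF, hG2, ← hgeom]
      calc (gp a (b+1) + Polynomial.X ^ (a+1) * gp (a+1) b) * (Fprod a * geomP (a+1))
          = (gp a (b+1) * Fprod a) * geomP (a+1)
            + Polynomial.X ^ (a+1) * (gp (a+1) b * (Fprod a * geomP (a+1))) := by ring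
        _ = Gprod a (b+1) * geomP (a+1)
            + Polynomial.X ^ (a+1) * (geomP (b+1) * Gprod a (b+1)) := by rw [h1, ← hF, h2, hG]
        _ = Gprod a (b+1) * (geomP (a+1) + Polynomial.X ^ (a+1) * geomP (b+1)) := by ring

lemma one_sub_pow (m : ℕ) : (1 - Polynomial.X ^ m : Polynomial ℚ) = (1 - Polynomial.X) * geomP m := by
  have := geom_sum_mul (Polynomial.X : Polynomial ℚ) m
  rw [geomP]
  linear_combination this

lemma qPoch_eq (n : ℕ) : qPochPoly n = (1 - Polynomial.X)^n * Fprod n := by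
  have hc : ((1 - Polynomial.X)^n : Polynomial ℚ) = ∏ _j ∈ Finset.range n, (1 - Polynomial.X) := by
    simp
  rw [qPochPoly, Fprod, hc, ← Finset.prod_mul_distrib]
  exact Finset.prod_congr rfl fun j _ => one_sub_pow (j+1)

lemma F_add (a b : ℕ) : Fprod (b + a) = Fprod b * Gprod a b := by
  rw [Fprod, Finset.prod_range_add, Fprod, Gprod]
  congr 1
  exact Finset.prod_congr rfl fun j _ => by congr 1; omega

lemma qPoch_ne (n : ℕ) : qPochPoly n ≠ 0 := by
  intro h
  have := congrArg (Polynomial.eval 0) h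
  simp [qPochPoly, Polynomial.eval_prod] at this

lemma key_div (a b : ℕ) : qPochPoly (a+b) = (qPochPoly a * qPochPoly b) * gp a b := by
  rw [qPoch_eq, qPoch_eq, qPoch_eq, show a+b = b+a by omega, F_add, ← gp_mul_F]
  ring

lemma gaussPoly_eq (a b : ℕ) : gaussPoly a b = gp a b := by
  rw [gaussPoly, key_div, mul_div_cancel_left₀]
  exact mul_ne_zero (qPoch_ne a) (qPoch_ne b)

/-! ### Moment machinery -/

noncomputable def th (P : Polynomial ℚ) : Polynomial ℚ := Polynomial.X * Polynomial.derivative P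

noncomputable def ev (P : Polynomial ℚ) : ℚ := P.eval 1
noncomputable def M1 (P : Polynomial ℚ) : ℚ := ev (th P)
noncomputable def M2 (P : Polynomial ℚ) : ℚ := ev (th (th P))
noncomputable def M3 (P : Polynomial ℚ) : ℚ := ev (th (th (th P)))
noncomputable def M4 (P : Polynomial ℚ) : ℚ := ev (th (th (th (th P))))

lemma th_coeff (P : Polynomial ℚ) (k : ℕ) : (th P).coeff k = k * P.coeff k := by
  cases k with
  | zero => simp [th, Polynomial.mul_coeff_zero]
  | succ n =>
      rw [th, Polynomial.coeff_X_mul, Polynomial.coeff_derivative]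
      push_cast
      ring

lemma th_natDegree_le (P : Polynomial ℚ) : (th P).natDegree ≤ P.natDegree := by
  rw [Polynomial.natDegree_le_iff_coeff_eq_zero]
  intro m hm
  rw [th_coeff, Polynomial.coeff_eq_zero_of_natDegree_lt hm, mul_zero]

lemma th_add (P Q : Polynomial ℚ) : th (P + Q) = th P + th Q := by
  simp [th, mul_add]

lemma th_mul (P Q : Polynomial ℚ) : th (P * Q) = th P * Q + P * th Q := by
  simp [th, Polynomial.derivative_mul]
  ring

lemma ev_mul (P Q : Polynomial ℚ) : ev (P * Q) = ev P * ev Q := by simp [ev]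
lemma ev_add (P Q : Polynomial ℚ) : ev (P + Q) = ev P + ev Q := by simp [ev]

lemma M1_mul (P Q : Polynomial ℚ) : M1 (P*Q) = M1 P * ev Q + ev P * M1 Q := by
  simp [M1, th_mul, ev_add, ev_mul]

lemma M2_mul (P Q : Polynomial ℚ) :
    M2 (P*Q) = M2 P * ev Q + 2 * (M1 P * M1 Q) + ev P * M2 Q := by
  simp only [M2, th_mul, th_add, ev_add, ev_mul, M1, ev, Polynomial.eval_add, Polynomial.eval_mul, Polynomial.eval_ofNat]
  ring

lemma M3_mul (P Q : Polynomial ℚ) :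
    M3 (P*Q) = M3 P * ev Q + 3 * (M2 P * M1 Q) + 3 * (M1 P * M2 Q) + ev P * M3 Q := by
  simp only [M3, M2, th_mul, th_add, ev_add, ev_mul, M1, ev, Polynomial.eval_add, Polynomial.eval_mul, Polynomial.eval_ofNat]
  ring

lemma M4_mul (P Q : Polynomial ℚ) :
    M4 (P*Q) = M4 P * ev Q + 4 * (M3 P * M1 Q) + 6 * (M2 P * M2 Q)
      + 4 * (M1 P * M3 Q) + ev P * M4 Q := by
  simp only [M4, M3, M2, th_mul, th_add, ev_add, ev_mul, M1, ev, Polynomial.eval_add, Polynomial.eval_mul, Polynomial.eval_ofNat]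
  ring

/-! ### Cumulants -/

noncomputable def c1 (P : Polynomial ℚ) : ℚ := M1 P / ev P
noncomputable def c2 (P : Polynomial ℚ) : ℚ := M2 P / ev P - (M1 P / ev P)^2
noncomputable def c4 (P : Polynomial ℚ) : ℚ :=
  M4 P / ev P - 4*(M3 P / ev P)*(M1 P / ev P) - 3*(M2 P / ev P)^2
    + 12*(M2 P / ev P)*(M1 P / ev P)^2 - 6*(M1 P / ev P)^4

lemma c1_mul {P Q : Polynomial ℚ} (hP : ev P ≠ 0) (hQ : ev Q ≠ 0) :
    c1 (P*Q) = c1 P + c1 Q := by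
  unfold c1
  rw [M1_mul, ev_mul]
  field_simp

lemma c2_mul {P Q : Polynomial ℚ} (hP : ev P ≠ 0) (hQ : ev Q ≠ 0) :
    c2 (P*Q) = c2 P + c2 Q := by
  unfold c2
  rw [M2_mul, M1_mul, ev_mul]
  field_simp
  ring

lemma c4_mul {P Q : Polynomial ℚ} (hP : ev P ≠ 0) (hQ : ev Q ≠ 0) :
    c4 (P*Q) = c4 P + c4 Q := by
  unfold c4
  rw [M4_mul, M3_mul, M2_mul, M1_mul, ev_mul]
  field_simp
  ring

lemma ev_prod (n : ℕ) (f : ℕ → Polynomial ℚ) :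
    ev (∏ j ∈ Finset.range n, f j) = ∏ j ∈ Finset.range n, ev (f j) := by
  simp [ev, Polynomial.eval_prod]

lemma ev_prod_ne {n : ℕ} {f : ℕ → Polynomial ℚ} (h : ∀ j ∈ Finset.range n, ev (f j) ≠ 0) :
    ev (∏ j ∈ Finset.range n, f j) ≠ 0 := by
  rw [ev_prod]
  exact Finset.prod_ne_zero_iff.mpr h

lemma c_prod (κ : Polynomial ℚ → ℚ)
    (hκ : ∀ P Q : Polynomial ℚ, ev P ≠ 0 → ev Q ≠ 0 → κ (P*Q) = κ P + κ Q)
    (hκ1 : κ 1 = 0) :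
    ∀ (n : ℕ) (f : ℕ → Polynomial ℚ), (∀ j ∈ Finset.range n, ev (f j) ≠ 0) →
      κ (∏ j ∈ Finset.range n, f j) = ∑ j ∈ Finset.range n, κ (f j) := by
  intro n
  induction n with
  | zero => intro f _; simpa using hκ1
  | succ m ih =>
      intro f hf
      rw [Finset.prod_range_succ, Finset.sum_range_succ,
        hκ _ _ (ev_prod_ne fun j hj => hf j (by simp at hj ⊢; omega))
          (hf m (by simp)),
        ih f (fun j hj => hf j (by simp at hj ⊢; omega))]

lemma c1_one : c1 1 = 0 := by simp [c1, M1, th, ev]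
lemma c2_one : c2 1 = 0 := by simp [c2, M1, M2, th, ev]
lemma c4_one : c4 1 = 0 := by simp [c4, M1, M2, M3, M4, th, ev]

/-! ### Moments of geomP -/

lemma th_pow (n : ℕ) : th (Polynomial.X ^ n : Polynomial ℚ) = (n : ℚ) • Polynomial.X ^ n := by
  cases n with
  | zero => simp [th]
  | succ m =>
      rw [th, Polynomial.derivative_X_pow]
      rw [Polynomial.smul_eq_C_mul]
      push_cast
      ring

lemma th_smul_sum (m : ℕ) (c : ℕ → ℚ) :
    th (∑ i ∈ Finset.range m, c i • Polynomial.X ^ i)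
      = ∑ i ∈ Finset.range m, (c i * i) • Polynomial.X ^ i := by
  have : th (∑ i ∈ Finset.range m, c i • Polynomial.X ^ i)
      = ∑ i ∈ Finset.range m, th (c i • Polynomial.X ^ i) := by
    simp [th, Polynomial.derivative_sum, Finset.mul_sum]
  rw [this]
  refine Finset.sum_congr rfl fun i _ => ?_
  have hsm : th (c i • Polynomial.X ^ i) = c i • th (Polynomial.X ^ i) := by
    simp [th]
  rw [hsm, th_pow, smul_smul]

lemma ev_smul_sum (m : ℕ) (c : ℕ → ℚ) :
    ev (∑ i ∈ Finset.range m, c i • Polynomial.X ^ i) = ∑ i ∈ Finset.range m, c i := by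
  simp [ev, Polynomial.eval_finset_sum]

lemma geomP_as_sum (m : ℕ) :
    geomP m = ∑ i ∈ Finset.range m, (1:ℚ) • Polynomial.X ^ i := by
  simp [geomP]

lemma ev_geom (m : ℕ) : ev (geomP m) = m := by
  simp [ev, geomP, Polynomial.eval_finset_sum]

lemma M1_geom (m : ℕ) : M1 (geomP m) = ∑ i ∈ Finset.range m, (i:ℚ) := by
  rw [M1, geomP_as_sum, th_smul_sum, ev_smul_sum]
  simp

lemma M2_geom (m : ℕ) : M2 (geomP m) = ∑ i ∈ Finset.range m, (i:ℚ)^2 := by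
  rw [M2, geomP_as_sum, th_smul_sum, th_smul_sum, ev_smul_sum]
  refine Finset.sum_congr rfl fun i _ => by ring

lemma M3_geom (m : ℕ) : M3 (geomP m) = ∑ i ∈ Finset.range m, (i:ℚ)^3 := by
  rw [M3, geomP_as_sum, th_smul_sum, th_smul_sum, th_smul_sum, ev_smul_sum]
  refine Finset.sum_congr rfl fun i _ => by ring

lemma M4_geom (m : ℕ) : M4 (geomP m) = ∑ i ∈ Finset.range m, (i:ℚ)^4 := by
  rw [M4, geomP_as_sum, th_smul_sum, th_smul_sum, th_smul_sum, th_smul_sum, ev_smul_sum]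
  refine Finset.sum_congr rfl fun i _ => by ring

/-! ### Power sums -/

lemma S1 (m : ℕ) : ∑ i ∈ Finset.range m, (i:ℚ) = m*(m-1)/2 := by
  induction m with
  | zero => simp
  | succ n ih => rw [Finset.sum_range_succ, ih]; push_cast; ring

lemma S2 (m : ℕ) : ∑ i ∈ Finset.range m, (i:ℚ)^2 = m*(m-1)*(2*m-1)/6 := by
  induction m with
  | zero => simp
  | succ n ih => rw [Finset.sum_range_succ, ih]; push_cast; ring

lemma S3 (m : ℕ) : ∑ i ∈ Finset.range m, (i:ℚ)^3 = (m*(m-1))^2/4 := by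
  induction m with
  | zero => simp
  | succ n ih => rw [Finset.sum_range_succ, ih]; push_cast; ring

lemma S4 (m : ℕ) : ∑ i ∈ Finset.range m, (i:ℚ)^4 = m*(m-1)*(2*m-1)*(3*m^2-3*m-1)/30 := by
  induction m with
  | zero => simp
  | succ n ih => rw [Finset.sum_range_succ, ih]; push_cast; ring

/-! ### Cumulants of geomP -/

lemma c1_geom (m : ℕ) (hm : 0 < m) : c1 (geomP m) = ((m:ℚ)-1)/2 := by
  have h : (m:ℚ) ≠ 0 := Nat.cast_ne_zero.mpr hm.ne'
  rw [c1, M1_geom, S1, ev_geom]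
  field_simp

lemma c2_geom (m : ℕ) (hm : 0 < m) : c2 (geomP m) = ((m:ℚ)^2-1)/12 := by
  have h : (m:ℚ) ≠ 0 := Nat.cast_ne_zero.mpr hm.ne'
  rw [c2, M2_geom, M1_geom, S2, S1, ev_geom]
  field_simp
  ring

lemma c4_geom (m : ℕ) (hm : 0 < m) : c4 (geomP m) = -((m:ℚ)^4-1)/120 := by
  have h : (m:ℚ) ≠ 0 := Nat.cast_ne_zero.mpr hm.ne'
  rw [c4, M4_geom, M3_geom, M2_geom, M1_geom, S4, S3, S2, S1, ev_geom]
  field_simp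
  ring

/-! ### Cumulants of gp -/

lemma ev_geom_ne (j : ℕ) : ev (geomP (j+1)) ≠ 0 := by
  rw [ev_geom]; positivity

lemma ev_F_ne (a : ℕ) : ev (Fprod a) ≠ 0 :=
  ev_prod_ne fun j _ => ev_geom_ne j

lemma ev_G_ne (a b : ℕ) : ev (Gprod a b) ≠ 0 := by
  refine ev_prod_ne fun j _ => ?_
  rw [show b+1+j = (b+j)+1 by omega]
  exact ev_geom_ne _

lemma ev_gp_ne (a b : ℕ) : ev (gp a b) ≠ 0 := by
  intro h
  have := gp_mul_F a b
  have h2 := congrArg ev this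
  rw [ev_mul, h, zero_mul] at h2
  exact ev_G_ne a b h2.symm

lemma c_gp (κ : Polynomial ℚ → ℚ)
    (hκ : ∀ P Q : Polynomial ℚ, ev P ≠ 0 → ev Q ≠ 0 → κ (P*Q) = κ P + κ Q)
    (hκ1 : κ 1 = 0) (a b : ℕ) :
    κ (gp a b) = ∑ j ∈ Finset.range a, (κ (geomP (b+1+j)) - κ (geomP (j+1))) := by
  have hmul := hκ _ _ (ev_gp_ne a b) (ev_F_ne a)
  rw [gp_mul_F] at hmul
  have hF : κ (Fprod a) = ∑ j ∈ Finset.range a, κ (geomP (j+1)) :=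
    c_prod κ hκ hκ1 a _ fun j _ => ev_geom_ne j
  have hG : κ (Gprod a b) = ∑ j ∈ Finset.range a, κ (geomP (b+1+j)) := by
    refine c_prod κ hκ hκ1 a _ fun j _ => ?_
    rw [show b+1+j = (b+j)+1 by omega]
    exact ev_geom_ne _
  rw [Finset.sum_sub_distrib, ← hF, ← hG]
  linarith [hmul, hF, hG]

lemma c1_gp (a b : ℕ) : c1 (gp a b) = (a:ℚ)*(b:ℚ)/2 := by
  rw [c_gp c1 (fun P Q hP hQ => c1_mul hP hQ) c1_one]
  have : ∀ j ∈ Finset.range a, c1 (geomP (b+1+j)) - c1 (geomP (j+1))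
      = ((b+1+j:ℕ):ℚ)/2 - 1/2 - (((j+1:ℕ):ℚ)/2 - 1/2) := by
    intro j _
    rw [c1_geom _ (by omega), c1_geom _ (by omega)]
    push_cast
    ring
  rw [Finset.sum_congr rfl this]
  clear this
  induction a with
  | zero => simp
  | succ n ih => rw [Finset.sum_range_succ, ih]; push_cast; ring

lemma c2_gp (a b : ℕ) : c2 (gp a b) = (a:ℚ)*(b:ℚ)*((a:ℚ)+(b:ℚ)+1)/12 := by
  rw [c_gp c2 (fun P Q hP hQ => c2_mul hP hQ) c2_one]
  have : ∀ j ∈ Finset.range a, c2 (geomP (b+1+j)) - c2 (geomP (j+1))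
      = (((b+1+j:ℕ):ℚ)^2-1)/12 - (((j+1:ℕ):ℚ)^2-1)/12 := by
    intro j _
    rw [c2_geom _ (by omega), c2_geom _ (by omega)]
  rw [Finset.sum_congr rfl this]
  clear this
  induction a with
  | zero => simp
  | succ n ih => rw [Finset.sum_range_succ, ih]; push_cast; ring

lemma c4_gp (a b : ℕ) :
    c4 (gp a b) = -((a:ℚ)*(b:ℚ)*((a:ℚ)+(b:ℚ)+1)*((a:ℚ)^2+(b:ℚ)^2+(a:ℚ)*(b:ℚ)+(a:ℚ)+(b:ℚ)))/120 := by
  rw [c_gp c4 (fun P Q hP hQ => c4_mul hP hQ) c4_one]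
  have : ∀ j ∈ Finset.range a, c4 (geomP (b+1+j)) - c4 (geomP (j+1))
      = -(((b+1+j:ℕ):ℚ)^4-1)/120 - (-(((j+1:ℕ):ℚ)^4-1)/120) := by
    intro j _
    rw [c4_geom _ (by omega), c4_geom _ (by omega)]
  rw [Finset.sum_congr rfl this]
  clear this
  induction a with
  | zero => simp
  | succ n ih => rw [Finset.sum_range_succ, ih]; push_cast; ring

/-! ### ev gp = binomial coefficient -/

lemma ev_F (a : ℕ) : ev (Fprod a) = (Nat.factorial a : ℚ) := by
  rw [Fprod, ev_prod]
  induction a with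
  | zero => simp
  | succ n ih =>
      rw [Finset.prod_range_succ, ih, ev_geom, Nat.factorial_succ]
      push_cast
      ring

lemma ev_G (a b : ℕ) : (Nat.factorial b : ℚ) * ev (Gprod a b) = (Nat.factorial (b+a) : ℚ) := by
  rw [Gprod, ev_prod]
  induction a with
  | zero => simp
  | succ n ih =>
      rw [Finset.prod_range_succ, ← mul_assoc, ih, ev_geom,
        show b+(n+1) = (b+n)+1 by omega, Nat.factorial_succ]
      push_cast
      ring

lemma ev_gp (a b : ℕ) : ev (gp a b) = ((a+b).choose a : ℚ) := by
  have h := congrArg ev (gp_mul_F a b)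
  rw [ev_mul, ev_F] at h
  have hfa : (Nat.factorial a : ℚ) ≠ 0 := Nat.cast_ne_zero.mpr (Nat.factorial_ne_zero a)
  have hfb : (Nat.factorial b : ℚ) ≠ 0 := Nat.cast_ne_zero.mpr (Nat.factorial_ne_zero b)
  have hG := ev_G a b
  rw [Nat.cast_choose ℚ (Nat.le_add_right a b)]
  have key : ev (gp a b) * (Nat.factorial a : ℚ) * (Nat.factorial b : ℚ)
      = (Nat.factorial (a+b) : ℚ) := by
    calc ev (gp a b) * (Nat.factorial a : ℚ) * (Nat.factorial b : ℚ)
        = (Nat.factorial b : ℚ) * (ev (gp a b) * (Nat.factorial a : ℚ)) := by ring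
      _ = (Nat.factorial b : ℚ) * ev (Gprod a b) := by rw [h]
      _ = (Nat.factorial (b+a) : ℚ) := hG
      _ = (Nat.factorial (a+b) : ℚ) := by rw [add_comm]
  rw [show a+b-a = b by omega]
  field_simp
  linear_combination key

/-! ### Degree bound -/

lemma gp_natDegree_le : ∀ a b, (gp a b).natDegree ≤ a * b
  | 0, b => by simp [gp_zero_left]
  | a+1, 0 => by simp [gp_zero_right]
  | a+1, b+1 => by
      have h1 := gp_natDegree_le a (b+1)
      have h2 := gp_natDegree_le (a+1) b
      rw [gp_succ]
      refine le_trans (Polynomial.natDegree_add_le _ _) (max_le ?_ ?_)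
      · nlinarith
      · refine le_trans (Polynomial.natDegree_mul_le) ?_
        rw [Polynomial.natDegree_X_pow]
        nlinarith

/-! ### Moments as coefficient sums -/

lemma ev_eq_sum (P : Polynomial ℚ) (d : ℕ) (h : P.natDegree ≤ d) :
    ev P = ∑ k ∈ Finset.range (d+1), P.coeff k := by
  rw [ev, Polynomial.eval_eq_sum_range' (Nat.lt_succ_of_le h)]
  simp

lemma M1_sum (P : Polynomial ℚ) (d : ℕ) (h : P.natDegree ≤ d) :
    M1 P = ∑ k ∈ Finset.range (d+1), (k:ℚ) * P.coeff k := by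
  rw [M1, ev_eq_sum _ d (le_trans (th_natDegree_le _) h)]
  exact Finset.sum_congr rfl fun k _ => by rw [th_coeff]

lemma M2_sum (P : Polynomial ℚ) (d : ℕ) (h : P.natDegree ≤ d) :
    M2 P = ∑ k ∈ Finset.range (d+1), (k:ℚ)^2 * P.coeff k := by
  rw [M2, ev_eq_sum _ d (le_trans (th_natDegree_le _) (le_trans (th_natDegree_le _) h))]
  exact Finset.sum_congr rfl fun k _ => by rw [th_coeff, th_coeff]; ring

lemma M3_sum (P : Polynomial ℚ) (d : ℕ) (h : P.natDegree ≤ d) :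
    M3 P = ∑ k ∈ Finset.range (d+1), (k:ℚ)^3 * P.coeff k := by
  rw [M3, ev_eq_sum _ d
    (le_trans (th_natDegree_le _) (le_trans (th_natDegree_le _) (le_trans (th_natDegree_le _) h)))]
  exact Finset.sum_congr rfl fun k _ => by rw [th_coeff, th_coeff, th_coeff]; ring

lemma M4_sum (P : Polynomial ℚ) (d : ℕ) (h : P.natDegree ≤ d) :
    M4 P = ∑ k ∈ Finset.range (d+1), (k:ℚ)^4 * P.coeff k := by
  rw [M4, ev_eq_sum _ d (le_trans (th_natDegree_le _) (le_trans (th_natDegree_le _)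
    (le_trans (th_natDegree_le _) (le_trans (th_natDegree_le _) h))))]
  exact Finset.sum_congr rfl fun k _ => by rw [th_coeff, th_coeff, th_coeff, th_coeff]; ring

/-- Remark 2.3 (fourth cumulant): with `p_{a,b}(k) = c_{a,b}(k)/C(a+b,a)`, `μ = ab/2` and
`σ² = ab(a+b+1)/12`, one has
`κ₄ = Σ_k (k-μ)⁴ p_{a,b}(k) - 3 σ⁴ = -ab(a+b+1)(a²+b²+ab+a+b)/120`. -/
theorem gaussian_fourth_cumulant (a b : ℕ) (ha : 0 < a) (hb : 0 < b) :
    ∑ k ∈ Finset.range (a * b + 1),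
        ((k : ℚ) - (a : ℚ) * (b : ℚ) / 2) ^ 4 *
          ((gaussPoly a b).coeff k / (Nat.choose (a + b) a : ℚ)) -
      3 * ((a : ℚ) * (b : ℚ) * ((a : ℚ) + (b : ℚ) + 1) / 12) ^ 2 =
    -((a : ℚ) * (b : ℚ) * ((a : ℚ) + (b : ℚ) + 1) *
        ((a : ℚ) ^ 2 + (b : ℚ) ^ 2 + (a : ℚ) * (b : ℚ) + (a : ℚ) + (b : ℚ))) / 120 := by
  rw [gaussPoly_eq]
  set N : ℚ := (Nat.choose (a + b) a : ℚ) with hNdef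
  have hN : N ≠ 0 := by
    rw [hNdef]
    exact_mod_cast (Nat.choose_pos (Nat.le_add_right a b)).ne'
  have hev : ev (gp a b) = N := ev_gp a b
  have hdeg := gp_natDegree_le a b
  set c : ℚ := (a : ℚ) * (b : ℚ) / 2 with hcdef
  -- the sum in terms of moments
  have hnum : ∑ k ∈ Finset.range (a * b + 1),
      ((k : ℚ) - c) ^ 4 * ((gp a b).coeff k / N)
      = (M4 (gp a b) - 4*c*M3 (gp a b) + 6*c^2*M2 (gp a b) - 4*c^3*M1 (gp a b) + c^4 * ev (gp a b)) / N := by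
    rw [M4_sum _ _ hdeg, M3_sum _ _ hdeg, M2_sum _ _ hdeg, M1_sum _ _ hdeg, ev_eq_sum _ _ hdeg,
      Finset.mul_sum, Finset.mul_sum, Finset.mul_sum, Finset.mul_sum,
      ← Finset.sum_sub_distrib, ← Finset.sum_add_distrib, ← Finset.sum_sub_distrib,
      ← Finset.sum_add_distrib, Finset.sum_div]
    exact Finset.sum_congr rfl fun k _ => by ring
  rw [hnum, hev]
  have E1 : M1 (gp a b) / N = c := by rw [← hev]; exact c1_gp a b
  have E2 : M2 (gp a b) / N - (M1 (gp a b) / N)^2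
      = (a : ℚ) * (b : ℚ) * ((a : ℚ) + (b : ℚ) + 1) / 12 := by
    rw [← hev]; exact c2_gp a b
  have E4 : M4 (gp a b) / N - 4*(M3 (gp a b) / N)*(M1 (gp a b) / N) - 3*(M2 (gp a b) / N)^2
      + 12*(M2 (gp a b) / N)*(M1 (gp a b) / N)^2 - 6*(M1 (gp a b) / N)^4
      = -((a : ℚ) * (b : ℚ) * ((a : ℚ) + (b : ℚ) + 1) *
        ((a : ℚ) ^ 2 + (b : ℚ) ^ 2 + (a : ℚ) * (b : ℚ) + (a : ℚ) + (b : ℚ))) / 120 := by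
    rw [← hev]; exact c4_gp a b
  rw [← E1, ← E2, ← E4]
  field_simp
  ring
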